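/- (Theorem 1, parts 2 and 3.) Let V : ℝ → ℝ be a continuously differentiable, convex, nonnegative potential, let k ∈ {0, −1}, and let θ, σ, φ, ψ, b be differentiable real-valued functions on [t₀, ∞) with b > 0 satisfying the Einstein–Klein–Gordon evolution system, the relation b'/b = (θ − √3σ)/3, and the constraint equation (1/3)θ² + k/b² = σ² + V(φ) + ψ²/2 at every time, with θ(t₀) ≥ 0. Then as t → ∞: σ(t) → 0, ψ(t) → 0, k/b(t)² → 0, and θ(t) → √(3V₀), where V₀ = inf_{x∈ℝ} V(x) is the infimum (minimum) of the potential. In particular, for the exponential potential V(x) = V₀′e^{−λx} with V₀′ > 0 and λ > 0 one has θ(t) → 0. -/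

import Mathlib

/-
Eliminating σ² from the Raychaudhuri equation with the constraint gives θ' = -F, where
F = θ² - 3V(φ) + 2k/b² = 3σ² + (3/2)ψ² - k/b², so 0 ≤ F ≤ θ² for k ≤ 0 and V ≥ 0.
Since |θ'| ≤ θ², Grönwall's inequality prevents θ from crossing zero, so θ decreases to a
limit θ∞ ≥ 0, and θ(t₀) bounds σ, ψ, V(φ) and k/b². For a convex nonnegative V the derivative
V' is bounded on sublevel sets, hence F' is bounded, and Barbalat's lemma (θ converges and θ''
is bounded, so θ' → 0) gives F → 0: σ, ψ, k/b² → 0 and V(φ) → θ∞²/3. Finally, if θ∞²/3 exceeded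
inf V, convexity would keep V'(φ) bounded away from zero with a fixed sign, and
ψ' = -θψ - V'(φ) would drive ψ to ±∞, contradicting ψ → 0.
-/

open Set Filter Topology

theorem antitoneOn_Ici_of_hasDerivAt_nonpos {f f' : ℝ → ℝ} {a : ℝ}
    (hf : ∀ t ∈ Ici a, HasDerivAt f (f' t) t) (hf' : ∀ t ∈ Ici a, f' t ≤ 0) :
    AntitoneOn f (Ici a) :=
  antitoneOn_of_hasDerivWithinAt_nonpos (convex_Ici a)
    (fun t ht => (hf t ht).continuousAt.continuousWithinAt)
    (fun t ht => (hf t (interior_subset ht)).hasDerivWithinAt)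
    (fun t ht => hf' t (interior_subset ht))

theorem AntitoneOn.exists_tendsto_of_le {f : ℝ → ℝ} {a c : ℝ} (hf : AntitoneOn f (Ici a))
    (hc : ∀ t ∈ Ici a, c ≤ f t) : ∃ L, c ≤ L ∧ Tendsto f atTop (𝓝 L) := by
  have hanti : Antitone fun t => f (max t a) := fun s t hst =>
    hf (le_max_right s a) (le_max_right t a) (max_le_max_right a hst)
  have hlim := tendsto_atTop_ciInf hanti ⟨c, by rintro _ ⟨t, rfl⟩; exact hc _ (le_max_right t a)⟩
  have hf_eq : (fun t => f (max t a)) =ᶠ[atTop] f := by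
    filter_upwards [eventually_ge_atTop a] with t ht
    rw [max_eq_left ht]
  exact ⟨_, le_ciInf fun t => hc _ (le_max_right t a), hlim.congr' hf_eq⟩

theorem tendsto_atBot_of_hasDerivAt_le_neg {f f' : ℝ → ℝ} {a m : ℝ} (hm : 0 < m)
    (hf : ∀ t ∈ Ici a, HasDerivAt f (f' t) t) (hf' : ∀ t ∈ Ici a, f' t ≤ -m) :
    Tendsto f atTop atBot := by
  have hanti : AntitoneOn (fun t => f t + m * t) (Ici a) :=
    antitoneOn_Ici_of_hasDerivAt_nonpos (fun t ht => (hf t ht).add ((hasDerivAt_id t).const_mul m))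
      (fun t ht => by linarith [hf' t ht])
  have hline : Tendsto (fun t => f a + m * a - m * t) atTop atBot :=
    tendsto_atBot_add_const_left _ _ (tendsto_neg_atTop_atBot.comp (tendsto_id.const_mul_atTop hm))
  refine tendsto_atBot_mono' _ ?_ hline
  filter_upwards [eventually_ge_atTop a] with t ht
  linarith [hanti self_mem_Ici ht ht]

theorem nonneg_of_abs_deriv_le_sq {f f' : ℝ → ℝ} {a : ℝ}
    (hf : ∀ t ∈ Ici a, HasDerivAt f (f' t) t) (hf' : ∀ t ∈ Ici a, |f' t| ≤ f t ^ 2)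
    (ha : 0 ≤ f a) : ∀ t ∈ Ici a, 0 ≤ f t := by
  intro t ht
  by_contra! hneg
  have hcont : ContinuousOn f (Icc a t) := fun s hs => (hf s hs.1).continuousAt.continuousWithinAt
  -- Grönwall from a zero `s` of `f`: on `[s, t]` we have `|f'| ≤ f² ≤ C |f|`, so `f t = 0`.
  obtain ⟨s, hs, hfs⟩ := intermediate_value_Icc' ht hcont ⟨hneg.le, ha⟩
  have hsub : Icc s t ⊆ Icc a t := Icc_subset_Icc_left hs.1
  obtain ⟨C, hC⟩ := isCompact_Icc.exists_bound_of_continuousOn (hcont.mono hsub)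
  have hbound : ∀ x ∈ Ico s t, ‖f' x‖ ≤ C * ‖f x‖ := fun x hx => by
    have hx' := Ico_subset_Icc_self hx
    calc ‖f' x‖ ≤ ‖f x‖ * ‖f x‖ := by
          simp only [Real.norm_eq_abs, sq_abs, ← sq]; exact hf' x (hsub hx').1
      _ ≤ C * ‖f x‖ := by gcongr; exact hC x hx'
  exact hneg.ne (eq_zero_of_abs_deriv_le_mul_abs_self_of_eq_zero_right (hcont.mono hsub)
    (fun x hx => (hf x (hsub (Ico_subset_Icc_self hx)).1).hasDerivWithinAt) hfs hbound
    t ⟨hs.2, le_rfl⟩)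

theorem tendsto_deriv_zero_of_tendsto_of_abs_deriv_le {f f' f'' : ℝ → ℝ} {a K L : ℝ}
    (hf : ∀ t ∈ Ici a, HasDerivAt f (f' t) t) (hf' : ∀ t ∈ Ici a, HasDerivAt f' (f'' t) t)
    (hK : ∀ t ∈ Ici a, |f'' t| ≤ K) (hL : Tendsto f atTop (𝓝 L)) :
    Tendsto f' atTop (𝓝 0) := by
  have hlip : ∀ s ∈ Ici a, ∀ t ∈ Ici a, |f' s - f' t| ≤ K * |s - t| := fun s hs t ht =>
    Convex.norm_image_sub_le_of_norm_hasDerivWithin_le (fun x hx => (hf' x hx).hasDerivWithinAt) hK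
      (convex_Ici a) ht hs
  have key : ∀ t ∈ Ici a, ∀ δ > 0, |f' t| ≤ |f (t + δ) - f t| / δ + K * δ := by
    intro t ht δ hδ
    obtain ⟨ξ, hξ, hslope⟩ := exists_hasDerivAt_eq_slope f f' (lt_add_of_pos_right t hδ)
      (fun x hx => (hf x (le_trans ht hx.1)).continuousAt.continuousWithinAt)
      (fun x hx => hf x (le_trans ht hx.1.le))
    rw [add_sub_cancel_left] at hslope
    have hvar : |f' ξ - f' t| ≤ K * δ := by
      have := hlip ξ (le_trans ht hξ.1.le) t ht
      rw [abs_of_pos (sub_pos.2 hξ.1)] at this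
      nlinarith [hξ.2, (abs_nonneg _).trans (hK t ht)]
    have hξ_eq : |f' ξ| = |f (t + δ) - f t| / δ := by rw [hslope, abs_div, abs_of_pos hδ]
    have := abs_sub_abs_le_abs_sub (f' t) (f' ξ)
    rw [abs_sub_comm] at this
    linarith
  have hK0 : 0 ≤ K := (abs_nonneg _).trans (hK a self_mem_Ici)
  rw [Metric.tendsto_nhds]
  intro ε hε
  set δ := ε / (2 * K + 1) with hδ
  have hδ0 : 0 < δ := by positivity
  have hKδ : K * δ < ε / 2 := by
    rw [hδ, mul_div_assoc', div_lt_div_iff₀ (by positivity) two_pos]; nlinarith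
  have hinc : Tendsto (fun t => f (t + δ) - f t) atTop (𝓝 0) := by
    simpa using (hL.comp (tendsto_atTop_add_const_right _ δ tendsto_id)).sub hL
  filter_upwards [eventually_ge_atTop a, Metric.tendsto_nhds.1 hinc (ε / 2 * δ) (by positivity)]
    with t ht hsmall
  rw [Real.dist_eq, sub_zero] at hsmall ⊢
  have := key t ht δ hδ0
  rw [← div_lt_iff₀ hδ0] at hsmall
  linarith

theorem tendsto_zero_of_mul_sq_le {f g : ℝ → ℝ} {c : ℝ} (hc : 0 < c)
    (hg : Tendsto g atTop (𝓝 0)) (hfg : ∀ᶠ t in atTop, c * f t ^ 2 ≤ g t) :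
    Tendsto f atTop (𝓝 0) := by
  refine squeeze_zero_norm' ?_ (by simpa using (hg.div_const c).sqrt)
  filter_upwards [hfg] with t ht
  exact Real.abs_le_sqrt (by rw [le_div_iff₀ hc]; linarith)

theorem IsPreconnected.forall_lt_or_forall_gt {f : ℝ → ℝ} {s : Set ℝ} {c : ℝ}
    (hs : IsPreconnected s) (hf : ContinuousOn f s) (hc : ∀ x ∈ s, f x ≠ c) :
    (∀ x ∈ s, f x < c) ∨ (∀ x ∈ s, c < f x) := by
  by_contra! h
  obtain ⟨⟨x, hx, hxc⟩, ⟨y, hy, hyc⟩⟩ := h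
  obtain ⟨z, hz, hzc⟩ :=
    (hs.image f hf).Icc_subset (mem_image_of_mem f hy) (mem_image_of_mem f hx) ⟨hyc, hxc⟩
  exact hc z hz hzc

theorem not_tendsto_zero_of_forcing_ge {θ ψ u : ℝ → ℝ} {a M m : ℝ} (hm : 0 < m)
    (hψ : ∀ t ∈ Ici a, HasDerivAt ψ (-θ t * ψ t - u t) t) (hθ : ∀ t ∈ Ici a, |θ t| ≤ M)
    (hu : ∀ t ∈ Ici a, m ≤ u t) : ¬Tendsto ψ atTop (𝓝 0) := by
  intro hψ0
  have hM : 0 ≤ M := (abs_nonneg _).trans (hθ a self_mem_Ici)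
  obtain ⟨T, hT⟩ := eventually_atTop.1 ((eventually_ge_atTop a).and
    (Metric.tendsto_nhds.1 hψ0 (m / 2 / (M + 1)) (by positivity)))
  have hdrift : ∀ t ∈ Ici T, -θ t * ψ t - u t ≤ -(m / 2) := by
    intro t ht
    obtain ⟨hat, hψt⟩ := hT t ht
    rw [Real.dist_eq, sub_zero] at hψt
    have hprod : |θ t * ψ t| ≤ m / 2 :=
      calc |θ t * ψ t| = |θ t| * |ψ t| := abs_mul _ _
        _ ≤ (M + 1) * (m / 2 / (M + 1)) := by gcongr; linarith [hθ t hat]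
        _ = m / 2 := by field_simp
    linarith [abs_le.1 hprod, hu t hat]
  exact not_tendsto_nhds_of_tendsto_atBot
    (tendsto_atBot_of_hasDerivAt_le_neg (half_pos hm) (fun t ht => hψ t (hT t ht).1) hdrift) 0 hψ0

theorem iInf_eq_zero_of_nonneg_of_tendsto {V : ℝ → ℝ} (h0 : ∀ x, 0 ≤ V x)
    (hV : Tendsto V atTop (𝓝 0)) : ⨅ x, V x = 0 := by
  have hbdd : BddBelow (range V) := ⟨0, by rintro _ ⟨y, rfl⟩; exact h0 y⟩
  exact le_antisymm (ge_of_tendsto' hV fun x => ciInf_le hbdd x) (le_ciInf h0)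

section ConvexPotential

variable {V : ℝ → ℝ}

theorem ConvexOn.add_deriv_mul_sub_le (hV : ConvexOn ℝ univ V) (hd : Differentiable ℝ V)
    (x y : ℝ) : V x + deriv V x * (y - x) ≤ V y := by
  rcases lt_trichotomy x y with hxy | rfl | hxy
  · have := hV.deriv_le_slope (mem_univ x) (mem_univ y) hxy (hd x)
    rw [slope_def_field, le_div_iff₀ (sub_pos.2 hxy)] at this
    linarith
  · simp
  · have := hV.slope_le_deriv (mem_univ y) (mem_univ x) hxy (hd x)
    rw [slope_def_field, div_le_iff₀ (sub_pos.2 hxy)] at this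
    linarith

theorem ConvexOn.comp_neg_univ (hV : ConvexOn ℝ univ V) : ConvexOn ℝ univ fun x => V (-x) := by
  refine ⟨convex_univ, fun x _ y _ a b ha hb hab => ?_⟩
  have := hV.2 (mem_univ (-x)) (mem_univ (-y)) ha hb hab
  simp only [smul_eq_mul] at this ⊢
  convert this using 2
  ring

theorem ConvexOn.exists_deriv_le_of_le (hV : ConvexOn ℝ univ V) (hd : Differentiable ℝ V)
    (hV0 : ∀ x, 0 ≤ V x) (c : ℝ) : ∃ u, ∀ x, V x ≤ c → deriv V x ≤ u := by
  by_cases h : ∃ x₁, 0 < deriv V x₁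
  · -- The tangent at `x₁` and `V ≥ 0` put `{V ≤ c}` to the left of `x₁ + c / V' x₁`.
    obtain ⟨x₁, hpos⟩ := h
    refine ⟨deriv V (x₁ + c / deriv V x₁), fun x hx =>
      hV.monotoneOn_deriv (fun y _ => hd y) (mem_univ _) (mem_univ _) ?_⟩
    rw [← sub_le_iff_le_add', le_div_iff₀ hpos]
    nlinarith [hV.add_deriv_mul_sub_le hd x₁ x, hV0 x₁]
  · push Not at h
    exact ⟨0, fun x _ => h x⟩

theorem ConvexOn.exists_abs_deriv_le_of_le (hV : ConvexOn ℝ univ V) (hd : Differentiable ℝ V)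
    (hV0 : ∀ x, 0 ≤ V x) (c : ℝ) : ∃ K, ∀ x, V x ≤ c → |deriv V x| ≤ K := by
  obtain ⟨u, hu⟩ := hV.exists_deriv_le_of_le hd hV0 c
  obtain ⟨l, hl⟩ := hV.comp_neg_univ.exists_deriv_le_of_le (hd.comp differentiable_neg)
    (fun x => hV0 (-x)) c
  refine ⟨max u l, fun x hx => abs_le.2 ⟨?_, (hu x hx).trans (le_max_left _ _)⟩⟩
  have := hl (-x) (by simpa using hx)
  rw [deriv_comp_neg, neg_neg] at this
  linarith [le_max_right u l]

theorem ConvexOn.div_le_deriv (hV : ConvexOn ℝ univ V) (hd : Differentiable ℝ V)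
    {a z x d : ℝ} (hd0 : 0 ≤ d) (haz : a < z) (hz : V a + d ≤ V z) (hax : a < x)
    (hx : V a + d ≤ V x) : d / (z - a) ≤ deriv V x := by
  have slope_bound : ∀ y, a < y → V a + d ≤ V y → d / (y - a) ≤ deriv V y := fun y hay hy =>
    calc d / (y - a) ≤ slope V a y := by
          rw [slope_def_field]; gcongr; linarith
      _ ≤ deriv V y := hV.slope_le_deriv (mem_univ a) (mem_univ y) hay (hd y)
  rcases le_total x z with hxz | hzx
  · calc d / (z - a) ≤ d / (x - a) := by gcongr
      _ ≤ deriv V x := slope_bound x hax hx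
  · exact (slope_bound z haz hz).trans
      (hV.monotoneOn_deriv (fun y _ => hd y) (mem_univ _) (mem_univ _) hzx)

theorem ConvexOn.deriv_le_neg_div (hV : ConvexOn ℝ univ V) (hd : Differentiable ℝ V)
    {a z x d : ℝ} (hd0 : 0 ≤ d) (hza : z < a) (hz : V a + d ≤ V z) (hxa : x < a)
    (hx : V a + d ≤ V x) : deriv V x ≤ -(d / (a - z)) := by
  have := hV.comp_neg_univ.div_le_deriv (hd.comp differentiable_neg) hd0 (neg_lt_neg hza)
    (by simpa using hz) (neg_lt_neg hxa) (by simpa using hx)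
  rw [deriv_comp_neg, neg_neg, neg_sub_neg] at this
  linarith

theorem ConvexOn.eq_iInf_of_tendsto_comp {θ φ ψ : ℝ → ℝ} {a M L : ℝ}
    (hV : ConvexOn ℝ univ V) (hd : Differentiable ℝ V) (hV0 : ∀ x, 0 ≤ V x)
    (hφ : ContinuousOn φ (Ici a))
    (hψ : ∀ t ∈ Ici a, HasDerivAt ψ (-θ t * ψ t - deriv V (φ t)) t)
    (hθ : ∀ t ∈ Ici a, |θ t| ≤ M) (hψ0 : Tendsto ψ atTop (𝓝 0))
    (hL : Tendsto (fun t => V (φ t)) atTop (𝓝 L)) : L = ⨅ x, V x := by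
  have hbdd : BddBelow (range V) := ⟨0, by rintro _ ⟨x, rfl⟩; exact hV0 x⟩
  refine le_antisymm ?_ (ge_of_tendsto hL (Eventually.of_forall fun t => ciInf_le hbdd (φ t)))
  by_contra! hlt
  obtain ⟨x₀, hx₀⟩ := exists_lt_of_ciInf_lt hlt
  set d := (L - V x₀) / 2 with hd_def
  have hd0 : 0 < d := by rw [hd_def]; linarith
  obtain ⟨T, hT⟩ := eventually_atTop.1 ((eventually_ge_atTop a).and
    (hL.eventually (eventually_gt_nhds (by linarith : V x₀ + d < L))))
  have hTa : Ici T ⊆ Ici a := fun t ht => (hT t ht).1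
  have hband : ∀ t ∈ Ici T, V x₀ + d ≤ V (φ t) := fun t ht => (hT t ht).2.le
  -- `φ` eventually stays on one side of `x₀` in `{V ≥ V x₀ + d}`, where `V'` has a fixed sign
  -- and is bounded away from zero.
  have hside := isPreconnected_Ici.forall_lt_or_forall_gt (hφ.mono hTa) (c := x₀)
    fun t ht h => by have := hband t ht; rw [h] at this; linarith
  rcases hside with hleft | hright
  · refine not_tendsto_zero_of_forcing_ge (ψ := fun t => -ψ t) (u := fun t => -deriv V (φ t))
      (div_pos hd0 (sub_pos.2 (hleft T self_mem_Ici))) (fun t ht => ?_) (fun t ht => hθ t (hTa ht))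
      (fun t ht => ?_) (by simpa using hψ0.neg)
    · exact (hψ t (hTa ht)).fun_neg.congr_deriv (by ring)
    · linarith [hV.deriv_le_neg_div hd hd0.le (hleft T self_mem_Ici) (hband T self_mem_Ici)
        (hleft t ht) (hband t ht)]
  · exact not_tendsto_zero_of_forcing_ge (div_pos hd0 (sub_pos.2 (hright T self_mem_Ici)))
      (fun t ht => hψ t (hTa ht)) (fun t ht => hθ t (hTa ht))
      (fun t ht => hV.div_le_deriv hd hd0.le (hright T self_mem_Ici) (hband T self_mem_Ici)
        (hright t ht) (hband t ht)) hψ0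

end ConvexPotential

structure BianchiEKG (V : ℝ → ℝ) (k t₀ : ℝ) (θ σ φ ψ b : ℝ → ℝ) : Prop where
  hasDerivAt_θ : ∀ t ∈ Ici t₀,
    HasDerivAt θ (-(1 / 3) * θ t ^ 2 - 2 * σ t ^ 2 + V (φ t) - ψ t ^ 2) t
  hasDerivAt_φ : ∀ t ∈ Ici t₀, HasDerivAt φ (ψ t) t
  hasDerivAt_ψ : ∀ t ∈ Ici t₀, HasDerivAt ψ (-θ t * ψ t - deriv V (φ t)) t
  hasDerivAt_b : ∀ t ∈ Ici t₀, HasDerivAt b ((θ t - √3 * σ t) / 3 * b t) t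
  b_pos : ∀ t ∈ Ici t₀, 0 < b t
  constraint : ∀ t ∈ Ici t₀,
    1 / 3 * θ t ^ 2 + k / b t ^ 2 = σ t ^ 2 + V (φ t) + ψ t ^ 2 / 2

noncomputable def dissipation (V : ℝ → ℝ) (k : ℝ) (θ φ b : ℝ → ℝ) (t : ℝ) : ℝ :=
  θ t ^ 2 - 3 * V (φ t) + 2 * k / b t ^ 2

theorem dissipation_le_sq {V : ℝ → ℝ} {k : ℝ} {θ φ b : ℝ → ℝ} (hV0 : ∀ x, 0 ≤ V x)
    (hk : k ≤ 0) (t : ℝ) : dissipation V k θ φ b t ≤ θ t ^ 2 := by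
  have : 2 * k / b t ^ 2 ≤ 0 := div_nonpos_of_nonpos_of_nonneg (by linarith) (sq_nonneg _)
  unfold dissipation
  linarith [hV0 (φ t)]

namespace BianchiEKG

variable {V : ℝ → ℝ} {k t₀ : ℝ} {θ σ φ ψ b : ℝ → ℝ}

theorem dissipation_eq (h : BianchiEKG V k t₀ θ σ φ ψ b) {t : ℝ} (ht : t ∈ Ici t₀) :
    dissipation V k θ φ b t = 3 * σ t ^ 2 + 3 / 2 * ψ t ^ 2 - k / b t ^ 2 := by
  unfold dissipation
  linear_combination 3 * h.constraint t ht

theorem hasDerivAt_θ_eq (h : BianchiEKG V k t₀ θ σ φ ψ b) :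
    ∀ t ∈ Ici t₀, HasDerivAt θ (-dissipation V k θ φ b t) t := fun t ht =>
  (h.hasDerivAt_θ t ht).congr_deriv (by unfold dissipation; linear_combination 2 * h.constraint t ht)

theorem dissipation_nonneg (h : BianchiEKG V k t₀ θ σ φ ψ b) (hk : k ≤ 0) {t : ℝ}
    (ht : t ∈ Ici t₀) : 0 ≤ dissipation V k θ φ b t := by
  have : k / b t ^ 2 ≤ 0 := div_nonpos_of_nonpos_of_nonneg hk (sq_nonneg _)
  rw [h.dissipation_eq ht]
  nlinarith [sq_nonneg (σ t), sq_nonneg (ψ t)]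

theorem θ_nonneg (h : BianchiEKG V k t₀ θ σ φ ψ b) (hV0 : ∀ x, 0 ≤ V x) (hk : k ≤ 0)
    (hθ₀ : 0 ≤ θ t₀) : ∀ t ∈ Ici t₀, 0 ≤ θ t :=
  nonneg_of_abs_deriv_le_sq h.hasDerivAt_θ_eq (fun t ht => by
    rw [abs_neg, abs_of_nonneg (h.dissipation_nonneg hk ht)]
    exact dissipation_le_sq hV0 hk t) hθ₀

theorem antitoneOn_θ (h : BianchiEKG V k t₀ θ σ φ ψ b) (hk : k ≤ 0) : AntitoneOn θ (Ici t₀) :=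
  antitoneOn_Ici_of_hasDerivAt_nonpos h.hasDerivAt_θ_eq
    fun _ ht => neg_nonpos.2 (h.dissipation_nonneg hk ht)

theorem exists_tendsto_θ (h : BianchiEKG V k t₀ θ σ φ ψ b) (hV0 : ∀ x, 0 ≤ V x) (hk : k ≤ 0)
    (hθ₀ : 0 ≤ θ t₀) : ∃ L, 0 ≤ L ∧ Tendsto θ atTop (𝓝 L) :=
  (h.antitoneOn_θ hk).exists_tendsto_of_le (h.θ_nonneg hV0 hk hθ₀)

theorem hasDerivAt_dissipation (h : BianchiEKG V k t₀ θ σ φ ψ b) (hd : Differentiable ℝ V) :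
    ∀ t ∈ Ici t₀, HasDerivAt (dissipation V k θ φ b)
      (-2 * θ t * dissipation V k θ φ b t - 3 * ψ t * deriv V (φ t)
        - 4 / 3 * (k / b t ^ 2) * (θ t - √3 * σ t)) t := by
  intro t ht
  have hb : b t ≠ 0 := (h.b_pos t ht).ne'
  have hVφ := (hd (φ t)).hasDerivAt.comp t (h.hasDerivAt_φ t ht)
  have hcurv := (hasDerivAt_const t (2 * k)).div ((h.hasDerivAt_b t ht).pow 2) (pow_ne_zero 2 hb)
  refine ((((h.hasDerivAt_θ_eq t ht).pow 2).sub (hVφ.const_mul 3)).add hcurv).congr_deriv ?_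
  unfold dissipation
  simp only [Pi.pow_apply]
  field_simp
  ring

theorem exists_abs_deriv_dissipation_le (h : BianchiEKG V k t₀ θ σ φ ψ b)
    (hV : ConvexOn ℝ univ V) (hd : Differentiable ℝ V) (hV0 : ∀ x, 0 ≤ V x) (hk : k ≤ 0)
    (hθ₀ : 0 ≤ θ t₀) : ∃ K, ∀ t ∈ Ici t₀, |-2 * θ t * dissipation V k θ φ b t
      - 3 * ψ t * deriv V (φ t) - 4 / 3 * (k / b t ^ 2) * (θ t - √3 * σ t)| ≤ K := by
  set M := θ t₀
  obtain ⟨K, hK⟩ := hV.exists_abs_deriv_le_of_le hd hV0 (M ^ 2)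
  refine ⟨2 * M * M ^ 2 + 3 * M * K + 4 / 3 * M ^ 2 * (M + M), fun t ht => ?_⟩
  have hθ0 : 0 ≤ θ t := h.θ_nonneg hV0 hk hθ₀ t ht
  have hθM : θ t ≤ M := h.antitoneOn_θ hk self_mem_Ici ht ht
  have hθM2 : θ t ^ 2 ≤ M ^ 2 := pow_le_pow_left₀ hθ0 hθM 2
  have hcon := h.constraint t ht
  have hkb : k / b t ^ 2 ≤ 0 := div_nonpos_of_nonpos_of_nonneg hk (sq_nonneg _)
  have hV0t := hV0 (φ t)
  have hσ : |√3 * σ t| ≤ M := by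
    refine abs_le_of_sq_le_sq ?_ (hθ0.trans hθM)
    rw [mul_pow, Real.sq_sqrt zero_le_three]
    nlinarith [sq_nonneg (ψ t)]
  have hψ : |ψ t| ≤ M := abs_le_of_sq_le_sq (by nlinarith [sq_nonneg (σ t)]) (hθ0.trans hθM)
  have hVφ : |deriv V (φ t)| ≤ K := hK _ (by nlinarith [sq_nonneg (σ t), sq_nonneg (ψ t)])
  have hkbM : |k / b t ^ 2| ≤ M ^ 2 := by
    rw [abs_of_nonpos hkb]; nlinarith [sq_nonneg (σ t), sq_nonneg (ψ t)]
  have hF0 := h.dissipation_nonneg hk ht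
  have hFM := (dissipation_le_sq (θ := θ) (φ := φ) (b := b) hV0 hk t).trans hθM2
  have t1 : |-2 * θ t * dissipation V k θ φ b t| ≤ 2 * M * M ^ 2 := by
    rw [abs_mul, abs_mul, abs_of_nonneg hθ0, abs_of_nonneg hF0]; norm_num; gcongr
  have t2 : |3 * ψ t * deriv V (φ t)| ≤ 3 * M * K := by
    rw [abs_mul, abs_mul, abs_of_pos three_pos]; gcongr
  have t3 : |4 / 3 * (k / b t ^ 2) * (θ t - √3 * σ t)| ≤ 4 / 3 * M ^ 2 * (M + M) := by
    rw [abs_mul, abs_mul, abs_of_pos (by norm_num : (0 : ℝ) < 4 / 3)]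
    gcongr
    exact (abs_sub _ _).trans (add_le_add (by rwa [abs_of_nonneg hθ0]) hσ)
  linarith [abs_sub (-2 * θ t * dissipation V k θ φ b t - 3 * ψ t * deriv V (φ t))
    (4 / 3 * (k / b t ^ 2) * (θ t - √3 * σ t)),
    abs_sub (-2 * θ t * dissipation V k θ φ b t) (3 * ψ t * deriv V (φ t))]

theorem tendsto_dissipation (h : BianchiEKG V k t₀ θ σ φ ψ b) (hV : ConvexOn ℝ univ V)
    (hd : Differentiable ℝ V) (hV0 : ∀ x, 0 ≤ V x) (hk : k ≤ 0) (hθ₀ : 0 ≤ θ t₀) :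
    Tendsto (dissipation V k θ φ b) atTop (𝓝 0) := by
  obtain ⟨L, -, hL⟩ := h.exists_tendsto_θ hV0 hk hθ₀
  obtain ⟨K, hK⟩ := h.exists_abs_deriv_dissipation_le hV hd hV0 hk hθ₀
  have := tendsto_deriv_zero_of_tendsto_of_abs_deriv_le h.hasDerivAt_θ_eq
    (fun t ht => (h.hasDerivAt_dissipation hd t ht).neg)
    (fun t ht => (abs_neg _).trans_le (hK t ht)) hL
  simpa using this.neg

theorem tendsto_σ (h : BianchiEKG V k t₀ θ σ φ ψ b) (hV : ConvexOn ℝ univ V)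
    (hd : Differentiable ℝ V) (hV0 : ∀ x, 0 ≤ V x) (hk : k ≤ 0) (hθ₀ : 0 ≤ θ t₀) :
    Tendsto σ atTop (𝓝 0) := by
  refine tendsto_zero_of_mul_sq_le three_pos (h.tendsto_dissipation hV hd hV0 hk hθ₀) ?_
  filter_upwards [eventually_ge_atTop t₀] with t ht
  have : k / b t ^ 2 ≤ 0 := div_nonpos_of_nonpos_of_nonneg hk (sq_nonneg _)
  rw [h.dissipation_eq ht]
  nlinarith [sq_nonneg (ψ t)]

theorem tendsto_ψ (h : BianchiEKG V k t₀ θ σ φ ψ b) (hV : ConvexOn ℝ univ V)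
    (hd : Differentiable ℝ V) (hV0 : ∀ x, 0 ≤ V x) (hk : k ≤ 0) (hθ₀ : 0 ≤ θ t₀) :
    Tendsto ψ atTop (𝓝 0) := by
  refine tendsto_zero_of_mul_sq_le (by norm_num : (0 : ℝ) < 3 / 2)
    (h.tendsto_dissipation hV hd hV0 hk hθ₀) ?_
  filter_upwards [eventually_ge_atTop t₀] with t ht
  have : k / b t ^ 2 ≤ 0 := div_nonpos_of_nonpos_of_nonneg hk (sq_nonneg _)
  rw [h.dissipation_eq ht]
  nlinarith [sq_nonneg (σ t)]

theorem tendsto_curvature (h : BianchiEKG V k t₀ θ σ φ ψ b) (hV : ConvexOn ℝ univ V)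
    (hd : Differentiable ℝ V) (hV0 : ∀ x, 0 ≤ V x) (hk : k ≤ 0) (hθ₀ : 0 ≤ θ t₀) :
    Tendsto (fun t => k / b t ^ 2) atTop (𝓝 0) := by
  have hF := h.tendsto_dissipation hV hd hV0 hk hθ₀
  refine tendsto_of_tendsto_of_tendsto_of_le_of_le' (by simpa using hF.neg) tendsto_const_nhds
    ?_ (Eventually.of_forall fun t => div_nonpos_of_nonpos_of_nonneg hk (sq_nonneg _))
  filter_upwards [eventually_ge_atTop t₀] with t ht
  rw [h.dissipation_eq ht]
  nlinarith [sq_nonneg (σ t), sq_nonneg (ψ t)]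

theorem tendsto_θ (h : BianchiEKG V k t₀ θ σ φ ψ b) (hV : ConvexOn ℝ univ V)
    (hd : Differentiable ℝ V) (hV0 : ∀ x, 0 ≤ V x) (hk : k ≤ 0) (hθ₀ : 0 ≤ θ t₀) :
    Tendsto θ atTop (𝓝 √(3 * ⨅ x, V x)) := by
  obtain ⟨L, hL0, hL⟩ := h.exists_tendsto_θ hV0 hk hθ₀
  have hVφ : Tendsto (fun t => V (φ t)) atTop (𝓝 (L ^ 2 / 3)) := by
    have := (((hL.pow 2).add ((h.tendsto_curvature hV hd hV0 hk hθ₀).const_mul 2)).sub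
      (h.tendsto_dissipation hV hd hV0 hk hθ₀)).div_const 3
    refine (by simpa using this : Tendsto _ atTop (𝓝 (L ^ 2 / 3))).congr fun t => ?_
    unfold dissipation
    ring
  have hθbound : ∀ t ∈ Ici t₀, |θ t| ≤ θ t₀ := fun t ht => by
    rw [abs_of_nonneg (h.θ_nonneg hV0 hk hθ₀ t ht)]
    exact h.antitoneOn_θ hk self_mem_Ici ht ht
  have hinf := hV.eq_iInf_of_tendsto_comp hd hV0
    (fun t ht => (h.hasDerivAt_φ t ht).continuousAt.continuousWithinAt) h.hasDerivAt_ψ hθbound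
    (h.tendsto_ψ hV hd hV0 hk hθ₀) hVφ
  rwa [← hinf, mul_div_cancel₀ _ three_ne_zero, Real.sqrt_sq hL0]

end BianchiEKG

theorem theorem1_parts2and3
    (V : ℝ → ℝ) (hV : ContDiff ℝ 1 V)
    (hVconv : ConvexOn ℝ Set.univ V) (hVnn : ∀ x, 0 ≤ V x)
    (k : ℝ) (hk : k = 0 ∨ k = -1)
    (t₀ : ℝ) (θ σ φ ψ b : ℝ → ℝ)
    (hθ : ∀ t ∈ Set.Ici t₀, DifferentiableAt ℝ θ t)
    (hφ : ∀ t ∈ Set.Ici t₀, DifferentiableAt ℝ φ t)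
    (hψ : ∀ t ∈ Set.Ici t₀, DifferentiableAt ℝ ψ t)
    (hbd : ∀ t ∈ Set.Ici t₀, DifferentiableAt ℝ b t)
    (hbpos : ∀ t ∈ Set.Ici t₀, 0 < b t)
    (eθ : ∀ t ∈ Set.Ici t₀,
      deriv θ t = -(1 / 3) * θ t ^ 2 - 2 * σ t ^ 2 + V (φ t) - ψ t ^ 2)
    (eφ : ∀ t ∈ Set.Ici t₀, deriv φ t = ψ t)
    (eψ : ∀ t ∈ Set.Ici t₀, deriv ψ t = -θ t * ψ t - deriv V (φ t))
    (eb : ∀ t ∈ Set.Ici t₀,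
      deriv b t / b t = (θ t - Real.sqrt 3 * σ t) / 3)
    (hcon : ∀ t ∈ Set.Ici t₀,
      (1 / 3) * θ t ^ 2 + k / b t ^ 2 = σ t ^ 2 + V (φ t) + ψ t ^ 2 / 2)
    (hθ₀ : 0 ≤ θ t₀) :
    Filter.Tendsto σ Filter.atTop (nhds 0) ∧
    Filter.Tendsto ψ Filter.atTop (nhds 0) ∧
    Filter.Tendsto (fun t => k / b t ^ 2) Filter.atTop (nhds 0) ∧
    Filter.Tendsto θ Filter.atTop (nhds (Real.sqrt (3 * ⨅ x, V x))) ∧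
    (∀ V₀' lam : ℝ, 0 < V₀' → 0 < lam →
      (∀ x, V x = V₀' * Real.exp (-lam * x)) →
      Filter.Tendsto θ Filter.atTop (nhds 0)) := by
  have hd : Differentiable ℝ V := hV.differentiable one_ne_zero
  have hk0 : k ≤ 0 := by rcases hk with rfl | rfl <;> norm_num
  have h : BianchiEKG V k t₀ θ σ φ ψ b :=
    { hasDerivAt_θ := fun t ht => eθ t ht ▸ (hθ t ht).hasDerivAt
      hasDerivAt_φ := fun t ht => eφ t ht ▸ (hφ t ht).hasDerivAt
      hasDerivAt_ψ := fun t ht => eψ t ht ▸ (hψ t ht).hasDerivAt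
      hasDerivAt_b := fun t ht => by
        rw [← eb t ht, div_mul_cancel₀ _ (hbpos t ht).ne']
        exact (hbd t ht).hasDerivAt
      b_pos := hbpos
      constraint := hcon }
  have hθlim := h.tendsto_θ hVconv hd hVnn hk0 hθ₀
  refine ⟨h.tendsto_σ hVconv hd hVnn hk0 hθ₀, h.tendsto_ψ hVconv hd hVnn hk0 hθ₀,
    h.tendsto_curvature hVconv hd hVnn hk0 hθ₀, hθlim, fun V₀' lam hV₀' hlam hVexp => ?_⟩
  have hexp : Tendsto V atTop (𝓝 0) := by
    rw [funext hVexp]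
    simpa using (Real.tendsto_exp_atBot.comp
      (tendsto_id.const_mul_atTop_of_neg (neg_lt_zero.2 hlam))).const_mul V₀'
  simpa [iInf_eq_zero_of_nonneg_of_tendsto hVnn hexp] using hθlim
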